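/- Let x_n = (1/n, 0, …, 0) ∈ ℝ^d and μ_n = δ_{x_n} − δ_0, whose Hahn–Jordan decomposition is (δ_{x_n}, δ_0) ∈ M(1,1), so μ_n ∈ SM(1,1). Then: (i) the sequence of pairs ((δ_{x_n}, δ_0))_{n≥1} is a Cauchy sequence with respect to γ_2, i.e., γ_2((δ_{x_n},δ_0),(δ_{x_m},δ_0)) → 0 as n, m → ∞; but (ii) there exists no signed measure μ ∈ SM(1,1), with Hahn–Jordan decomposition (μ¹,μ²) ∈ M(1,1), such that γ_2((δ_{x_n},δ_0),(μ¹,μ²)) → 0 as n → ∞. In particular, SM(1,1) equipped with the distance inherited from γ_2 via Hahn–Jordan decompositions is not a complete metric space. -/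

import Mathlib

open MeasureTheory Set Filter

noncomputable section

/-- `ℝ^d` with the Euclidean norm. -/
abbrev Euc (d : ℕ) := EuclideanSpace ℝ (Fin d)

/-- The bounded metric `ρ(x,y) = min (1, ‖x - y‖)`. -/
def rho {d : ℕ} (x y : Euc d) : ℝ := min 1 (dist x y)

/-- `M(m)`: finite nonnegative Borel measures on `ℝ^d` with total mass `m`. -/
def Mset (d : ℕ) (m : ℝ) : Set (Measure (Euc d)) :=
  {μ | μ Set.univ = ENNReal.ofReal m}

/-- `H(μ,ν)`: joint representations of the pair `(μ,ν)`, where `μ, ν ∈ M(m)`. -/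
def Hrep {d : ℕ} (m : ℝ) (μ ν : Measure (Euc d)) : Set (Measure (Euc d × Euc d)) :=
  {Q | ∀ A : Set (Euc d), MeasurableSet A →
      Q (A ×ˢ Set.univ) = ENNReal.ofReal m * μ A ∧
      Q (Set.univ ×ˢ A) = ENNReal.ofReal m * ν A}

/-- The Wasserstein distance `W_p` on `M(m)` associated with the metric `ρ`. -/
def Wp {d : ℕ} (p m : ℝ) (μ ν : Measure (Euc d)) : ℝ :=
  sInf ((fun Q : Measure (Euc d × Euc d) => ∫ z, rho z.1 z.2 ^ p ∂Q) '' Hrep m μ ν) ^ (1 / p)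

/-- The metric `γ_p` on `M(m₁,m₂) = M(m₁) × M(m₂)`. -/
def gammap {d : ℕ} (p m₁ m₂ : ℝ) (x y : Measure (Euc d) × Measure (Euc d)) : ℝ :=
  (Wp p m₁ x.1 y.1 ^ p + Wp p m₂ x.2 y.2 ^ p) ^ (1 / p)

/-- The sequence `x_n = (1/n, 0, …, 0) ∈ ℝ^d`. -/
def xseq (d : ℕ) (hd : 0 < d) (n : ℕ) : Euc d :=
  EuclideanSpace.single (⟨0, hd⟩ : Fin d) (1 / (n : ℝ))

/-!
A coupling of `δ_x` with a probability measure `μ` is forced to be `δ_x ⊗ μ`, so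
`γ₂((δ_x, δ_0), (μ¹, μ²))² = ∫ ρ(x, ·)² dμ¹ + ∫ ρ(0, ·)² dμ²`. Along `x = x_n → 0` the right-hand
side tends to `∫ ρ(0, ·)² dμ¹ + ∫ ρ(0, ·)² dμ²`, which vanishes only if `μ¹ = μ² = δ_0`; such a
pair is not mutually singular. The Cauchy property is inherited from `(x_n)`, since
`γ₂((δ_{x_n}, δ_0), (δ_{x_k}, δ_0)) = ρ(x_n, x_k)`.
-/

open Topology

section Rho

variable {d : ℕ}

lemma rho_nonneg (x y : Euc d) : 0 ≤ rho x y := le_min zero_le_one dist_nonneg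

lemma rho_le_dist (x y : Euc d) : rho x y ≤ dist x y := min_le_right _ _

lemma rho_self (x : Euc d) : rho x x = 0 := by simp [rho]

lemma rho_eq_zero_iff {x y : Euc d} : rho x y = 0 ↔ x = y := by
  simp only [rho, min_eq_iff, dist_eq_zero, one_ne_zero, false_and, false_or,
    and_iff_left_iff_imp]
  rintro rfl
  simp

lemma rho_sq_le_one (x y : Euc d) : rho x y ^ 2 ≤ 1 :=
  pow_le_one₀ (rho_nonneg x y) (min_le_left _ _)

lemma continuous_rho : Continuous fun p : Euc d × Euc d => rho p.1 p.2 :=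
  continuous_const.min continuous_dist

lemma integrable_rho_sq (x : Euc d) (μ : Measure (Euc d)) [IsFiniteMeasure μ] :
    Integrable (fun y => rho x y ^ 2) μ :=
  .of_bound ((continuous_rho.comp (Continuous.prodMk_right x)).pow 2).aestronglyMeasurable 1
    (ae_of_all _ fun y => by simpa using rho_sq_le_one x y)

lemma continuous_integral_rho_sq (μ : Measure (Euc d)) [IsFiniteMeasure μ] :
    Continuous fun x => ∫ y, rho x y ^ 2 ∂μ :=
  continuous_of_dominated
    (fun x => (integrable_rho_sq x μ).aestronglyMeasurable)
    (fun x => ae_of_all _ fun y => by simpa using rho_sq_le_one x y)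
    (integrable_const 1)
    (ae_of_all _ fun y => (continuous_rho.comp (Continuous.prodMk_left y)).pow 2)

lemma eq_dirac_of_integral_rho_sq_eq_zero {x : Euc d} {μ : Measure (Euc d)}
    [IsProbabilityMeasure μ] (h : ∫ y, rho x y ^ 2 ∂μ = 0) : μ = Measure.dirac x := by
  have hae : ∀ᵐ y ∂μ, y = x := by
    filter_upwards [(integral_eq_zero_iff_of_nonneg (fun y => sq_nonneg _)
      (integrable_rho_sq x μ)).1 h] with y hy
    exact (rho_eq_zero_iff.1 (pow_eq_zero_iff two_ne_zero |>.1 hy)).symm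
  calc μ = μ.map id := Measure.map_id.symm
    _ = μ.map fun _ => x := Measure.map_congr hae
    _ = Measure.dirac x := by rw [Measure.map_const, measure_univ, one_smul]

end Rho

section DiracCoupling

variable {d : ℕ} {x : Euc d} {μ : Measure (Euc d)} [IsProbabilityMeasure μ]

lemma mem_Hrep_one_dirac_left_iff {Q : Measure (Euc d × Euc d)} :
    Q ∈ Hrep 1 (Measure.dirac x) μ ↔ Q = (Measure.dirac x).prod μ := by
  constructor
  · intro hQ
    have hsnd : Q.map Prod.snd = μ := by
      ext A hA
      rw [Measure.map_apply measurable_snd hA, ← Set.univ_prod]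
      simpa using (hQ A hA).2
    have hfst : ∀ᵐ z ∂Q, z.1 = x := by
      have h := (hQ {x}ᶜ (measurableSet_singleton x).compl).1
      rw [Set.prod_univ] at h
      simpa [ae_iff, Set.compl_def] using h
    calc Q = Q.map id := Measure.map_id.symm
      _ = Q.map fun z => (x, z.2) := Measure.map_congr (hfst.mono fun z hz => Prod.ext hz rfl)
      _ = (Q.map Prod.snd).map (Prod.mk x) := (Measure.map_map (by fun_prop) measurable_snd).symm
      _ = (Measure.dirac x).prod μ := by rw [hsnd, Measure.dirac_prod]
  · rintro rfl A _
    simp [Measure.prod_prod]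

lemma Wp_two_dirac_left :
    Wp 2 1 (Measure.dirac x) μ = √(∫ y, rho x y ^ 2 ∂μ) := by
  have hH : Hrep 1 (Measure.dirac x) μ = {(Measure.dirac x).prod μ} :=
    Set.ext fun _ => mem_Hrep_one_dirac_left_iff
  rw [Wp, hH, Set.image_singleton, csInf_singleton, Real.sqrt_eq_rpow, Measure.dirac_prod]
  simp only [Real.rpow_two]
  rw [integral_map (f := fun p : Euc d × Euc d => rho p.1 p.2 ^ 2) (by fun_prop)
    (continuous_rho.pow 2).aestronglyMeasurable]

end DiracCoupling

lemma gammap_two_dirac_left {d : ℕ} (x y : Euc d) (μ ν : Measure (Euc d))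
    [IsProbabilityMeasure μ] [IsProbabilityMeasure ν] :
    gammap 2 1 1 (Measure.dirac x, Measure.dirac y) (μ, ν) =
      √(∫ z, rho x z ^ 2 ∂μ + ∫ z, rho y z ^ 2 ∂ν) := by
  rw [gammap, Wp_two_dirac_left, Wp_two_dirac_left, Real.rpow_two, Real.rpow_two,
    Real.sq_sqrt (integral_nonneg fun _ => sq_nonneg _),
    Real.sq_sqrt (integral_nonneg fun _ => sq_nonneg _), ← Real.sqrt_eq_rpow]

lemma gammap_two_dirac_dirac {d : ℕ} (x y z : Euc d) :
    gammap 2 1 1 (Measure.dirac x, Measure.dirac z) (Measure.dirac y, Measure.dirac z) =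
      rho x y := by
  rw [gammap_two_dirac_left, integral_dirac, integral_dirac, rho_self]
  simp [Real.sqrt_sq (rho_nonneg x y)]

lemma tendsto_xseq {d : ℕ} (hd : 0 < d) : Tendsto (xseq d hd) atTop (𝓝 0) := by
  rw [tendsto_zero_iff_norm_tendsto_zero]
  simpa [xseq] using (tendsto_one_div_atTop_nhds_zero_nat (𝕜 := ℝ)).norm

/-- the pairs `(δ_{x_n}, δ_0)` form a `γ₂`-Cauchy sequence of Hahn–Jordan
decompositions of elements of `SM(1,1)`, but no signed measure in `SM(1,1)` (i.e. no pair of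
mutually singular measures of mass 1 each) is a `γ₂`-limit of this sequence; in particular
`SM(1,1)` with the metric inherited from `γ₂` is not complete. -/
theorem SM_not_complete {d : ℕ} (hd : 0 < d) :
    -- (i) Cauchy with respect to γ₂
    (∀ ε : ℝ, 0 < ε → ∃ N : ℕ, ∀ n ≥ N, ∀ k ≥ N,
      gammap 2 1 1 (Measure.dirac (xseq d hd n), Measure.dirac (0 : Euc d))
        (Measure.dirac (xseq d hd k), Measure.dirac (0 : Euc d)) < ε) ∧
    -- (ii) no limit whose components form the Hahn–Jordan decomposition of a
    -- signed measure in SM(1,1)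
    ¬ ∃ μ1 μ2 : Measure (Euc d),
        μ1 Set.univ = 1 ∧ μ2 Set.univ = 1 ∧ μ1 ⟂ₘ μ2 ∧
        Tendsto (fun n => gammap 2 1 1
          (Measure.dirac (xseq d hd n), Measure.dirac (0 : Euc d)) (μ1, μ2))
          atTop (nhds 0) := by
  constructor
  · intro ε hε
    obtain ⟨N, hN⟩ := Metric.cauchySeq_iff.1 (tendsto_xseq hd).cauchySeq ε hε
    refine ⟨N, fun n hn k hk => ?_⟩
    rw [gammap_two_dirac_dirac]
    exact (rho_le_dist _ _).trans_lt (hN n hn k hk)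
  · rintro ⟨μ1, μ2, hμ1, hμ2, hsing, htend⟩
    have : IsProbabilityMeasure μ1 := ⟨hμ1⟩
    have : IsProbabilityMeasure μ2 := ⟨hμ2⟩
    simp only [gammap_two_dirac_left] at htend
    have hlim := (((continuous_integral_rho_sq μ1).tendsto 0).comp (tendsto_xseq hd)).add_const
      (∫ z, rho 0 z ^ 2 ∂μ2) |>.sqrt
    have hI1 : 0 ≤ ∫ z, rho 0 z ^ 2 ∂μ1 := integral_nonneg fun _ => sq_nonneg _
    have hI2 : 0 ≤ ∫ z, rho 0 z ^ 2 ∂μ2 := integral_nonneg fun _ => sq_nonneg _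
    obtain ⟨h1, h2⟩ := (add_eq_zero_iff_of_nonneg hI1 hI2).1 <|
      (Real.sqrt_eq_zero (add_nonneg hI1 hI2)).1 (tendsto_nhds_unique hlim htend)
    rw [eq_dirac_of_integral_rho_sq_eq_zero h1, eq_dirac_of_integral_rho_sq_eq_zero h2,
      Measure.MutuallySingular.self_iff] at hsing
    exact Measure.dirac_ne_zero hsing
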